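/- Let f ∈ ℝ[[a,b,x]] be a formal power series every monomial of which has degree at least 2 in b and degree at least 2 in x. Then there is a unique formal power series φ = Σ_{n≥2} φ_n(y,y') xⁿ with coefficients φ_n ∈ ℝ[[y,y']] satisfying the fixed-point equation φ = −f(y − x y' + φ − x ∂_x φ, y' + ∂_x φ, x) (an identity of formal power series in x with coefficients in ℝ[[y,y']]), and every coefficient φ_n is divisible by (y')² in ℝ[[y,y']]. -/

import Mathlib

/- The fixed point equation `φ = −f(y − x y' + φ − x ∂ₓφ, y' + ∂ₓφ, x)`.
   The series `f` lives in ℝ[[a,b,x]] (variables indexed 0,1,2) and `φ` lives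
   in ℝ[[y,y',x]] (y ↦ 0, y' ↦ 1, x ↦ 2). -/

open MvPowerSeries

/-- Substitution of power series (with vanishing constant terms) into a power
series, defined coefficientwise through truncation. -/
noncomputable def substPS {σ τ : Type} [Fintype σ] [DecidableEq σ]
    (s : σ → MvPowerSeries τ ℝ) (g : MvPowerSeries σ ℝ) : MvPowerSeries τ ℝ :=
  fun d => MvPowerSeries.coeff (R := ℝ) d
    (MvPolynomial.aeval s (MvPowerSeries.trunc ℝ
      (Finsupp.equivFunOnFinite.symm (fun _ => (d.sum fun _ k => k) + 1)) g))

/-- Formal partial derivative with respect to the variable `x` (index 2). -/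
noncomputable def dX (φ : MvPowerSeries (Fin 3) ℝ) : MvPowerSeries (Fin 3) ℝ :=
  fun d => ((d 2 : ℝ) + 1) * MvPowerSeries.coeff (R := ℝ) (d + Finsupp.single 2 1) φ

/-- The fixed point equation
`φ = −f(y − x y' + φ − x ∂ₓφ, y' + ∂ₓφ, x)` for `φ ∈ ℝ[[y,y',x]]`. -/
noncomputable def FixedPointEq (f φ : MvPowerSeries (Fin 3) ℝ) : Prop :=
  φ = - substPS
    ![X 0 - X 2 * X 1 + φ - X 2 * dX φ, X 1 + dX φ, (X 2 : MvPowerSeries (Fin 3) ℝ)] f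

/-! The map `φ ↦ −f(y − x y' + φ − x ∂ₓφ, y' + ∂ₓφ, x)` is a contraction for the `x`-adic order:
`∂ₓ` lowers the `x`-order of a difference by one, but every monomial of `f` carries `x²`. A
contraction has exactly one fixed point, the coefficientwise limit of its iterates from `0`. Every
monomial of `f` also carries `b²`, and `b ↦ y' + ∂ₓφ` is divisible by `y'` as soon as `φ` is, so
all iterates, and hence the fixed point, are divisible by `(y')²`. -/

open Function

namespace MvPowerSeries

open Finsupp

section WeightedOrder

variable {σ R : Type*}

theorem le_weightedOrder_single_one_iff [Semiring R] [DecidableEq σ] (j : σ) (k : ℕ)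
    (f : MvPowerSeries σ R) :
    (k : ℕ∞) ≤ f.weightedOrder (Pi.single j 1) ↔ ∀ d, coeff d f ≠ 0 → k ≤ d j := by
  constructor
  · intro h d hd
    have hle := weightedOrder_le (Pi.single j 1) hd
    rw [weight_single_one_apply] at hle
    exact_mod_cast h.trans hle
  · refine fun h => le_weightedOrder _ fun d hd => by_contra fun hne => ?_
    rw [weight_single_one_apply] at hd
    exact (h d hne).not_gt (by exact_mod_cast hd)

theorem weightedOrder_X [Semiring R] [Nontrivial R] (w : σ → ℕ) (i : σ) :
    (X i : MvPowerSeries σ R).weightedOrder w = w i := by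
  rw [X, weightedOrder_monomial_of_ne_zero w one_ne_zero, weight_single, one_smul]

variable [CommRing R] (w : σ → ℕ)

theorem coeff_eq_of_lt_weightedOrder_sub {f g : MvPowerSeries σ R} {d : σ →₀ ℕ}
    (h : weight w d < (f - g).weightedOrder w) : coeff d f = coeff d g := by
  rw [← sub_eq_zero, ← map_sub]
  exact coeff_eq_zero_of_lt_weightedOrder w h

theorem min_weightedOrder_le_sub (f g : MvPowerSeries σ R) :
    min (f.weightedOrder w) (g.weightedOrder w) ≤ (f - g).weightedOrder w := by
  rw [sub_eq_add_neg, ← weightedOrder_neg w g]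
  exact min_weightedOrder_le_add w

theorem weightedOrder_le_of_dvd {f g : MvPowerSeries σ R} (h : f ∣ g) :
    f.weightedOrder w ≤ g.weightedOrder w := by
  obtain ⟨q, rfl⟩ := h
  exact le_self_add.trans (le_weightedOrder_mul w)

theorem weightedOrder_sub_le_pow_sub_pow (f g : MvPowerSeries σ R) (k : ℕ) :
    (f - g).weightedOrder w ≤ (f ^ k - g ^ k).weightedOrder w :=
  weightedOrder_le_of_dvd w (sub_dvd_pow_sub_pow f g k)

theorem min_weightedOrder_sub_le_mul_sub_mul (a b c d : MvPowerSeries σ R) :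
    min ((a - c).weightedOrder w) ((b - d).weightedOrder w) ≤
      (a * b - c * d).weightedOrder w := by
  rw [show a * b - c * d = (a - c) * b + c * (b - d) by ring]
  exact (min_le_min (le_self_add.trans (le_weightedOrder_mul w))
    (le_add_self.trans (le_weightedOrder_mul w))).trans (min_weightedOrder_le_add w)

theorem nsmul_weightedOrder_le_prod_pow {ι : Type*} [Fintype ι] (s : ι → MvPowerSeries σ R)
    (e : ι → ℕ) (i : ι) :
    e i • (s i).weightedOrder w ≤ (∏ j, s j ^ e j).weightedOrder w :=
  (le_weightedOrder_pow w (e i)).trans <|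
    (Finset.single_le_sum (fun _ _ => zero_le) (Finset.mem_univ i)).trans
      (le_weightedOrder_prod w _ _)

theorem weightedOrder_tsub_le_pderiv (i : σ) (f : MvPowerSeries σ R) :
    f.weightedOrder w - w i ≤ (pderiv R i f).weightedOrder w := by
  refine le_weightedOrder w fun d hd => ?_
  rw [coeff_pderiv, coeff_eq_zero_of_lt_weightedOrder w, zero_mul]
  rw [map_add, weight_single, one_smul, Nat.cast_add]
  exact lt_tsub_iff_right.1 hd

end WeightedOrder

section Contraction

variable {σ R : Type*} [CommRing R] {w : σ → ℕ}

def IsContraction (w : σ → ℕ) (F : MvPowerSeries σ R → MvPowerSeries σ R) : Prop :=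
  ∀ φ ψ, (φ - ψ).weightedOrder w + 1 ≤ (F φ - F ψ).weightedOrder w

/-- For a contraction, the coefficient of weight `k` of `F^[n] 0` no longer changes once `n > k`. -/
noncomputable def iterateLimit (w : σ → ℕ) (F : MvPowerSeries σ R → MvPowerSeries σ R) :
    MvPowerSeries σ R :=
  fun d => coeff d (F^[weight w d + 1] 0)

theorem coeff_iterateLimit (F : MvPowerSeries σ R → MvPowerSeries σ R) (d : σ →₀ ℕ) :
    coeff d (iterateLimit w F) = coeff d (F^[weight w d + 1] 0) :=
  rfl

theorem le_weightedOrder_iterateLimit {F : MvPowerSeries σ R → MvPowerSeries σ R}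
    {v : σ → ℕ} {k : ℕ∞} (h : ∀ n, k ≤ (F^[n] 0).weightedOrder v) :
    k ≤ (iterateLimit w F).weightedOrder v :=
  le_weightedOrder v fun d hd => by
    rw [coeff_iterateLimit]
    exact coeff_eq_zero_of_lt_weightedOrder v (hd.trans_le (h _))

namespace IsContraction

variable {F : MvPowerSeries σ R → MvPowerSeries σ R} (hF : IsContraction w F)
include hF

theorem eq_of_isFixedPt {φ ψ : MvPowerSeries σ R} (hφ : IsFixedPt F φ) (hψ : IsFixedPt F ψ) :
    φ = ψ := by
  have h := hF φ ψ
  rw [hφ.eq, hψ.eq] at h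
  rw [← sub_eq_zero, ← weightedOrder_eq_top_iff w]
  by_contra hne
  exact ((ENat.add_one_le_iff hne).1 h).false

theorem le_weightedOrder_iterate_sub (φ ψ : MvPowerSeries σ R) (n : ℕ) :
    (n : ℕ∞) ≤ (F^[n] φ - F^[n] ψ).weightedOrder w := by
  induction n with
  | zero => simp
  | succ n ih =>
    rw [iterate_succ_apply', iterate_succ_apply', Nat.cast_succ]
    exact (add_le_add_left ih 1).trans (hF _ _)

theorem le_weightedOrder_iterateLimit_sub (n : ℕ) :
    (n : ℕ∞) ≤ (iterateLimit w F - F^[n] 0).weightedOrder w := by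
  refine le_weightedOrder w fun d hd => ?_
  rw [map_sub, sub_eq_zero, coeff_iterateLimit]
  obtain ⟨k, rfl⟩ := Nat.exists_eq_add_of_lt (Nat.cast_lt.1 hd)
  apply coeff_eq_of_lt_weightedOrder_sub w
  rw [add_right_comm, iterate_add_apply F (weight w d + 1) k]
  exact (Nat.cast_lt.2 (Nat.lt_succ_self _)).trans_le (hF.le_weightedOrder_iterate_sub _ _ _)

theorem isFixedPt_iterateLimit : IsFixedPt F (iterateLimit w F) := by
  rw [IsFixedPt, ← sub_eq_zero, ← weightedOrder_eq_top_iff w, ENat.eq_top_iff_forall_ge]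
  intro n
  have hF_lim := (add_le_add_left (hF.le_weightedOrder_iterateLimit_sub n) 1).trans
    (hF (iterateLimit w F) (F^[n] 0))
  rw [← iterate_succ_apply' F n] at hF_lim
  have hlim := hF.le_weightedOrder_iterateLimit_sub (n + 1)
  calc (n : ℕ∞) ≤ n + 1 := le_self_add
    _ ≤ min _ _ := le_min hF_lim (by exact_mod_cast hlim)
    _ ≤ _ := by
      rw [← sub_sub_sub_cancel_right (F (iterateLimit w F)) (iterateLimit w F) (F^[n + 1] 0)]
      exact min_weightedOrder_le_sub w _ _

end IsContraction

end Contraction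

end MvPowerSeries

theorem coeff_substPS {σ τ : Type} [Fintype σ] [DecidableEq σ] (s : σ → MvPowerSeries τ ℝ)
    (g : MvPowerSeries σ ℝ) (d : τ →₀ ℕ) :
    coeff d (substPS s g) =
      ∑ e ∈ Finset.Iio (Finsupp.equivFunOnFinite.symm fun _ => (d.sum fun _ k => k) + 1),
        coeff e g * coeff d (∏ i, s i ^ e i) := by
  rw [coeff_apply]
  simp only [substPS]
  rw [trunc, truncFinset_apply, map_sum, map_sum]
  refine Finset.sum_congr rfl fun e _ => ?_
  rw [MvPolynomial.aeval_monomial, ← Algebra.smul_def, map_smul, smul_eq_mul,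
    Finsupp.prod_fintype _ _ fun i => pow_zero _]

section SubstPSOrder

variable {σ τ : Type} [Fintype σ] [DecidableEq σ] (w : τ → ℕ) {g : MvPowerSeries σ ℝ} {k : ℕ∞}

theorem le_weightedOrder_substPS {s : σ → MvPowerSeries τ ℝ}
    (h : ∀ e, coeff e g ≠ 0 → k ≤ (∏ i, s i ^ e i).weightedOrder w) :
    k ≤ (substPS s g).weightedOrder w := by
  refine le_weightedOrder w fun d hd => ?_
  rw [coeff_substPS]
  refine Finset.sum_eq_zero fun e _ => ?_
  by_cases he : coeff e g = 0
  · rw [he, zero_mul]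
  · rw [coeff_eq_zero_of_lt_weightedOrder w (hd.trans_le (h e he)), mul_zero]

theorem le_weightedOrder_substPS_sub {s t : σ → MvPowerSeries τ ℝ}
    (h : ∀ e, coeff e g ≠ 0 → k ≤ (∏ i, s i ^ e i - ∏ i, t i ^ e i).weightedOrder w) :
    k ≤ (substPS s g - substPS t g).weightedOrder w := by
  refine le_weightedOrder w fun d hd => ?_
  rw [map_sub, coeff_substPS, coeff_substPS, ← Finset.sum_sub_distrib]
  refine Finset.sum_eq_zero fun e _ => ?_
  rw [← mul_sub, ← map_sub]
  by_cases he : coeff e g = 0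
  · rw [he, zero_mul]
  · rw [coeff_eq_zero_of_lt_weightedOrder w (hd.trans_le (h e he)), mul_zero]

end SubstPSOrder

theorem dX_eq_pderiv (φ : MvPowerSeries (Fin 3) ℝ) : dX φ = pderiv ℝ 2 φ := by
  ext d
  rw [coeff_pderiv]
  exact mul_comm _ _

noncomputable def substArgs (φ : MvPowerSeries (Fin 3) ℝ) : Fin 3 → MvPowerSeries (Fin 3) ℝ :=
  ![X 0 - X 2 * X 1 + φ - X 2 * dX φ, X 1 + dX φ, X 2]

noncomputable def fixedPointMap (f φ : MvPowerSeries (Fin 3) ℝ) : MvPowerSeries (Fin 3) ℝ :=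
  -substPS (substArgs φ) f

theorem fixedPointEq_iff_isFixedPt {f φ : MvPowerSeries (Fin 3) ℝ} :
    FixedPointEq f φ ↔ IsFixedPt (fixedPointMap f) φ :=
  eq_comm

theorem prod_substArgs_pow (φ : MvPowerSeries (Fin 3) ℝ) (e : Fin 3 →₀ ℕ) :
    ∏ i, substArgs φ i ^ e i = substArgs φ 0 ^ e 0 * substArgs φ 1 ^ e 1 * X 2 ^ e 2 :=
  Fin.prod_univ_three _

variable {f : MvPowerSeries (Fin 3) ℝ}

theorem two_le_weightedOrder_fixedPointMap (hf : ∀ e, coeff e f ≠ 0 → 2 ≤ e 2)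
    (φ : MvPowerSeries (Fin 3) ℝ) :
    2 ≤ (fixedPointMap f φ).weightedOrder (Pi.single 2 1) := by
  rw [fixedPointMap, weightedOrder_neg]
  refine le_weightedOrder_substPS _ fun e he => ?_
  calc (2 : ℕ∞) ≤ e 2 • (substArgs φ 2).weightedOrder (Pi.single 2 1) := by
        rw [substArgs, Matrix.cons_val_two, Matrix.tail_cons, Matrix.head_cons, weightedOrder_X,
          Pi.single_eq_same, Nat.cast_one, nsmul_one]
        exact_mod_cast hf e he
    _ ≤ _ := nsmul_weightedOrder_le_prod_pow _ _ _ 2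

theorem two_le_weightedOrder_fixedPointMap_of_two_le (hf : ∀ e, coeff e f ≠ 0 → 2 ≤ e 1)
    {φ : MvPowerSeries (Fin 3) ℝ} (hφ : 2 ≤ φ.weightedOrder (Pi.single 1 1)) :
    2 ≤ (fixedPointMap f φ).weightedOrder (Pi.single 1 1) := by
  have hdX : 2 ≤ (dX φ).weightedOrder (Pi.single 1 1) := by
    rw [dX_eq_pderiv]
    refine hφ.trans ?_
    simpa using weightedOrder_tsub_le_pderiv (Pi.single (1 : Fin 3) 1) 2 φ
  have h1 : 1 ≤ (substArgs φ 1).weightedOrder (Pi.single 1 1) := by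
    refine le_trans ?_ (min_weightedOrder_le_add _)
    rw [weightedOrder_X, Pi.single_eq_same, Nat.cast_one]
    exact le_min le_rfl (one_le_two.trans hdX)
  rw [fixedPointMap, weightedOrder_neg]
  refine le_weightedOrder_substPS _ fun e he => ?_
  calc (2 : ℕ∞) ≤ e 1 • (1 : ℕ∞) := by rw [nsmul_one]; exact_mod_cast hf e he
    _ ≤ e 1 • (substArgs φ 1).weightedOrder (Pi.single 1 1) := by gcongr
    _ ≤ _ := nsmul_weightedOrder_le_prod_pow _ _ _ 1

theorem isContraction_fixedPointMap (hf : ∀ e, coeff e f ≠ 0 → 2 ≤ e 2) :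
    IsContraction (Pi.single 2 1) (fixedPointMap f) := by
  intro φ ψ
  rw [fixedPointMap, fixedPointMap, neg_sub_neg, ← weightedOrder_neg _ (substPS _ f - _), neg_sub]
  set ω : MvPowerSeries (Fin 3) ℝ → ℕ∞ := weightedOrder (Pi.single 2 1)
  have hdX : ω (φ - ψ) - 1 ≤ ω (dX φ - dX ψ) := by
    simpa [dX_eq_pderiv] using weightedOrder_tsub_le_pderiv (Pi.single 2 1) 2 (φ - ψ)
  have h0 : ω (φ - ψ) - 1 ≤ ω (substArgs φ 0 - substArgs ψ 0) := by
    have : substArgs φ 0 - substArgs ψ 0 = (φ - ψ) - X 2 * (dX φ - dX ψ) := by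
      simp only [substArgs, Matrix.cons_val_zero]; ring
    rw [this]
    exact (le_min tsub_le_self (hdX.trans (le_add_self.trans (le_weightedOrder_mul _)))).trans
      (min_weightedOrder_le_sub _ _ _)
  have h1 : ω (φ - ψ) - 1 ≤ ω (substArgs φ 1 - substArgs ψ 1) := by
    simpa [substArgs] using hdX
  refine le_weightedOrder_substPS_sub _ fun e he => ?_
  rw [prod_substArgs_pow, prod_substArgs_pow, ← sub_mul]
  calc ω (φ - ψ) + 1 ≤ ω (φ - ψ) - 1 + 1 + 1 := by gcongr; exact le_tsub_add
    _ = ω (φ - ψ) - 1 + 2 := by rw [add_assoc, one_add_one_eq_two]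
    _ ≤ ω (φ - ψ) - 1 + e 2 := by gcongr; exact_mod_cast hf e he
    _ ≤ ω (substArgs φ 0 ^ e 0 * substArgs φ 1 ^ e 1 - substArgs ψ 0 ^ e 0 * substArgs ψ 1 ^ e 1)
          + ω (X 2 ^ e 2) := by
        gcongr
        · exact (le_min (h0.trans (weightedOrder_sub_le_pow_sub_pow _ _ _ _))
            (h1.trans (weightedOrder_sub_le_pow_sub_pow _ _ _ _))).trans
            (min_weightedOrder_sub_le_mul_sub_mul _ _ _ _ _)
        · simpa [ω, weightedOrder_X] using le_weightedOrder_pow (Pi.single (2 : Fin 3) 1)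
            (f := (X 2 : MvPowerSeries (Fin 3) ℝ)) (e 2)
    _ ≤ _ := le_weightedOrder_mul _

theorem two_le_weightedOrder_iterate_fixedPointMap (hf : ∀ e, coeff e f ≠ 0 → 2 ≤ e 1) (n : ℕ) :
    2 ≤ ((fixedPointMap f)^[n] 0).weightedOrder (Pi.single 1 1) := by
  induction n with
  | zero => simp
  | succ n ih =>
    rw [iterate_succ_apply']
    exact two_le_weightedOrder_fixedPointMap_of_two_le hf ih

/-- Let `f ∈ ℝ[[a,b,x]]` have every monomial of degree ≥ 2 in `b` and degree
≥ 2 in `x`.  Then there is a unique formal power series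
`φ = Σ_{n≥2} φₙ(y,y') xⁿ` (i.e. every monomial of `φ` has `x`-degree ≥ 2)
satisfying `φ = −f(y − x y' + φ − x ∂ₓφ, y' + ∂ₓφ, x)`, and every `φₙ` is
divisible by `(y')²` (every monomial of `φ` has `y'`-degree ≥ 2). -/
theorem stmt7 (f : MvPowerSeries (Fin 3) ℝ)
    (hf : ∀ d, MvPowerSeries.coeff (R := ℝ) d f ≠ 0 → 2 ≤ d 1 ∧ 2 ≤ d 2) :
    (∃! φ : MvPowerSeries (Fin 3) ℝ,
      (∀ d, MvPowerSeries.coeff (R := ℝ) d φ ≠ 0 → 2 ≤ d 2) ∧ FixedPointEq f φ) ∧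
    (∀ φ : MvPowerSeries (Fin 3) ℝ,
      (∀ d, MvPowerSeries.coeff (R := ℝ) d φ ≠ 0 → 2 ≤ d 2) → FixedPointEq f φ →
      ∀ d, MvPowerSeries.coeff (R := ℝ) d φ ≠ 0 → 2 ≤ d 1) := by
  have hF := isContraction_fixedPointMap fun e he => (hf e he).2
  set φ₀ := iterateLimit (Pi.single 2 1) (fixedPointMap f)
  have hφ₀ : IsFixedPt (fixedPointMap f) φ₀ := hF.isFixedPt_iterateLimit
  have hunique : ∀ φ, FixedPointEq f φ → φ = φ₀ := fun φ hφ =>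
    hF.eq_of_isFixedPt (fixedPointEq_iff_isFixedPt.1 hφ) hφ₀
  refine ⟨⟨φ₀, ⟨?_, fixedPointEq_iff_isFixedPt.2 hφ₀⟩, fun φ hφ => hunique φ hφ.2⟩,
    fun φ _ hφ => ?_⟩
  · rw [← le_weightedOrder_single_one_iff, ← hφ₀.eq]
    exact two_le_weightedOrder_fixedPointMap (fun e he => (hf e he).2) φ₀
  · rw [hunique φ hφ, ← le_weightedOrder_single_one_iff]
    exact le_weightedOrder_iterateLimit
      (two_le_weightedOrder_iterate_fixedPointMap fun e he => (hf e he).1)
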